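/- arXiv:2308.14783 — 3 statements merged into one kernel-verified Lean document; each statement's English description precedes it below -/
import Mathlib

section
/- For every w ∈ ℝ^d and every α ∈ ℝ^m, the duality gap satisfies P(w) − D(α) ≥ (λ/2)·‖w − Aα‖₂². In particular, P(w) ≥ D(α) for all w and α (weak duality). -/
open scoped BigOperators InnerProductSpace

/-!
Expanding `‖w - Aα‖²` turns the coupling term `λ⟪w, Aα⟫` into `(1/m) Σ αᵢ ⟪w, xᵢ⟫`, so the
duality gap `P(w) - D(α)` equals `(λ/2)‖w - Aα‖²` plus the average of the Fenchel–Young gaps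
`ℓᵢ(⟪w, xᵢ⟫) + ℓ*ᵢ(-αᵢ) - ⟪w, xᵢ⟫(-αᵢ)`, each of which is nonnegative.
-/

section DualityGap

variable {E ι : Type*} [NormedAddCommGroup E] [InnerProductSpace ℝ E] [Fintype ι]

noncomputable def dualMap (lam : ℝ) (x : ι → E) (α : ι → ℝ) : E :=
  (1 / (lam * Fintype.card ι)) • ∑ i, α i • x i

noncomputable def primalObjective (lam : ℝ) (x : ι → E) (ℓ : ι → ℝ → ℝ) (w : E) : ℝ :=
  lam / 2 * ‖w‖ ^ 2 + (1 / Fintype.card ι) * ∑ i, ℓ i ⟪w, x i⟫_ℝ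

noncomputable def dualObjective (lam : ℝ) (x : ι → E) (ℓs : ι → ℝ → ℝ) (α : ι → ℝ) : ℝ :=
  -(lam / 2) * ‖dualMap lam x α‖ ^ 2 - (1 / Fintype.card ι) * ∑ i, ℓs i (-(α i))

def fenchelYoungGap (f g : ℝ → ℝ) (a b : ℝ) : ℝ := f a + g b - a * b

theorem fenchelYoungGap_nonneg {f g : ℝ → ℝ} (hFY : ∀ a b, a * b ≤ f a + g b) (a b : ℝ) :
    0 ≤ fenchelYoungGap f g a b :=
  sub_nonneg.2 (hFY a b)

theorem mul_inner_dualMap {lam : ℝ} (hlam : lam ≠ 0) (x : ι → E) (α : ι → ℝ) (w : E) :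
    lam * ⟪w, dualMap lam x α⟫_ℝ = (1 / Fintype.card ι) * ∑ i, ⟪w, x i⟫_ℝ * α i := by
  simp only [dualMap, real_inner_smul_right, inner_sum, mul_comm (α _)]
  field_simp

theorem primalObjective_sub_dualObjective {lam : ℝ} (hlam : lam ≠ 0) (x : ι → E)
    (ℓ ℓs : ι → ℝ → ℝ) (w : E) (α : ι → ℝ) :
    primalObjective lam x ℓ w - dualObjective lam x ℓs α =
      lam / 2 * ‖w - dualMap lam x α‖ ^ 2 +
        (1 / Fintype.card ι) * ∑ i, fenchelYoungGap (ℓ i) (ℓs i) ⟪w, x i⟫_ℝ (-(α i)) := by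
  have hcoupling := mul_inner_dualMap hlam x α w
  simp only [primalObjective, dualObjective, fenchelYoungGap, norm_sub_sq_real, mul_neg,
    Finset.sum_sub_distrib, Finset.sum_add_distrib, Finset.sum_neg_distrib]
  linear_combination hcoupling

theorem sq_norm_sub_dualMap_le_primal_sub_dual {lam : ℝ} (hlam : lam ≠ 0) (x : ι → E)
    {ℓ ℓs : ι → ℝ → ℝ} (hFY : ∀ i, ∀ a b : ℝ, a * b ≤ ℓ i a + ℓs i b) (w : E) (α : ι → ℝ) :
    lam / 2 * ‖w - dualMap lam x α‖ ^ 2 ≤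
      primalObjective lam x ℓ w - dualObjective lam x ℓs α := by
  rw [primalObjective_sub_dualObjective hlam]
  have hgaps := Finset.sum_nonneg fun i (_ : i ∈ Finset.univ) =>
    fenchelYoungGap_nonneg (hFY i) ⟪w, x i⟫_ℝ (-(α i))
  have hcard : (0 : ℝ) ≤ 1 / Fintype.card ι := by positivity
  linarith [mul_nonneg hcard hgaps]

theorem dualObjective_le_primalObjective {lam : ℝ} (hlam : 0 < lam) (x : ι → E)
    {ℓ ℓs : ι → ℝ → ℝ} (hFY : ∀ i, ∀ a b : ℝ, a * b ≤ ℓ i a + ℓs i b) (w : E) (α : ι → ℝ) :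
    dualObjective lam x ℓs α ≤ primalObjective lam x ℓ w := by
  have hgap := sq_norm_sub_dualMap_le_primal_sub_dual hlam.ne' x hFY w α
  have hsq : 0 ≤ lam / 2 * ‖w - dualMap lam x α‖ ^ 2 := by positivity
  linarith

end DualityGap

theorem weak_duality_gap_bound_general
    (m d : ℕ)
    (x : Fin m → EuclideanSpace ℝ (Fin d))
    (lam : ℝ) (hlam : 0 < lam)
    (ℓ ℓs : Fin m → ℝ → ℝ)
    (hFY : ∀ i, ∀ a b : ℝ, a * b ≤ ℓ i a + ℓs i b)
    (A : (Fin m → ℝ) → EuclideanSpace ℝ (Fin d))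
    (hA : ∀ α, A α = (1 / (lam * m)) • ∑ i, α i • x i)
    (P : EuclideanSpace ℝ (Fin d) → ℝ)
    (hP : ∀ w, P w = lam / 2 * ‖w‖ ^ 2 + (1 / m) * ∑ i, ℓ i ⟪w, x i⟫_ℝ)
    (D : (Fin m → ℝ) → ℝ)
    (hD : ∀ α, D α = -(lam / 2) * ‖A α‖ ^ 2 - (1 / m) * ∑ i, ℓs i (-(α i)))
    (w : EuclideanSpace ℝ (Fin d)) (α : Fin m → ℝ) :
    lam / 2 * ‖w - A α‖ ^ 2 ≤ P w - D α ∧ D α ≤ P w := by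
  obtain rfl : A = dualMap lam x := funext fun α => by rw [hA, dualMap, Fintype.card_fin]
  obtain rfl : P = primalObjective lam x ℓ :=
    funext fun w => by rw [hP, primalObjective, Fintype.card_fin]
  obtain rfl : D = dualObjective lam x ℓs :=
    funext fun α => by rw [hD, dualObjective, Fintype.card_fin]
  exact ⟨sq_norm_sub_dualMap_le_primal_sub_dual hlam.ne' x hFY w α,
    dualObjective_le_primalObjective hlam x hFY w α⟩

/-- Weak duality with the quadratic gap bound:
`P(w) − D(α) ≥ (λ/2)·‖w − Aα‖²`, and in particular `P(w) ≥ D(α)`. -/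
theorem weak_duality_gap_bound
    (m d : ℕ) (hm : 0 < m) (hd : 0 < d)
    (x : Fin m → EuclideanSpace ℝ (Fin d)) (hx : ∀ i, ‖x i‖ ≤ 1)
    (lam : ℝ) (hlam : 0 < lam)
    (ℓ ℓs : Fin m → ℝ → ℝ)
    (hFY : ∀ i, ∀ a b : ℝ, a * b ≤ ℓ i a + ℓs i b)
    (A : (Fin m → ℝ) → EuclideanSpace ℝ (Fin d))
    (hA : ∀ α, A α = (1 / (lam * m)) • ∑ i, α i • x i)
    (P : EuclideanSpace ℝ (Fin d) → ℝ)
    (hP : ∀ w, P w = lam / 2 * ‖w‖ ^ 2 + (1 / m) * ∑ i, ℓ i ⟪w, x i⟫_ℝ)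
    (D : (Fin m → ℝ) → ℝ)
    (hD : ∀ α, D α = -(lam / 2) * ‖A α‖ ^ 2 - (1 / m) * ∑ i, ℓs i (-(α i)))
    (w : EuclideanSpace ℝ (Fin d)) (α : Fin m → ℝ) :
    lam / 2 * ‖w - A α‖ ^ 2 ≤ P w - D α ∧ D α ≤ P w :=
  weak_duality_gap_bound_general m d x lam hlam ℓ ℓs hFY A hA P hP D hD w α
end

section
/- (Per-step expected improvement of GDCA-Tree.) Suppose each ℓ*_i is convex, so that D is concave. Let (Ω, 𝔉, μ) be a probability space, let S_1, …, S_K be pairwise disjoint subsets of {1, …, m}, and let Δ_1, …, Δ_K : Ω → ℝ^m be measurable maps with (Δ_k(ω))_i = 0 for all i ∉ S_k and all ω. Fix α ∈ ℝ^m and assume for each k that the set {D(β) : β_i = α_i for all i ∉ S_k} is bounded above, so ε_{S_k} is defined at α and at α + Δ_k(ω). Let β_1, …, β_K ∈ [0,1] with Σ_k β_k = 1 and Θ_1, …, Θ_K ∈ [0,1). Assume ω ↦ D(α + Σ_k β_k Δ_k(ω)) and ω ↦ ε_{S_k}(α + Δ_k(ω)) (for each k) are integrable, and that for each k, ∫ ε_{S_k}(α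 + Δ_k(ω)) dμ(ω) ≤ Θ_k · ε_{S_k}(α). Then ∫ D(α + Σ_k β_k Δ_k(ω)) dμ(ω) − D(α) ≥ ( min_{k=1,…,K} (1 − Θ_k) β_k ) · Σ_{k=1}^K ε_{S_k}(α). -/
open scoped BigOperators
open MeasureTheory

/-- Local sub-optimality gap over an index set `S`:
`ε_S(α) = sup {D(β) : β agrees with α outside S} − D(α)`. -/
noncomputable def locGap {m : ℕ} (D : (Fin m → ℝ) → ℝ) (S : Set (Fin m))
    (α : Fin m → ℝ) : ℝ :=
  sSup (D '' {β | ∀ i ∉ S, β i = α i}) - D α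

/-!
Since `Δₖ` only moves coordinates in `Sₖ`, the block supremum defining `ε_{Sₖ}` is the same at
`α` and at `α + Δₖ(ω)`, so `D(α + Δₖ(ω)) − D(α) = ε_{Sₖ}(α) − ε_{Sₖ}(α + Δₖ(ω))`. Taking
expectations, block `k` alone gains at least `(1 − Θₖ) ε_{Sₖ}(α)`. The combined update
`α + Σₖ βₖ Δₖ` is the convex combination `Σₖ βₖ (α + Δₖ)`, so concavity of `D` (Jensen,
pointwise in `ω`, then integrated) bounds its gain below by `Σₖ βₖ (1 − Θₖ) ε_{Sₖ}(α)`; as every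
gap is nonnegative, this dominates the minimum weight times `Σₖ ε_{Sₖ}(α)`.
-/

open Finset Set

theorem convexOn_finset_sum {ι E : Type*} [AddCommMonoid E] [Module ℝ E] {s : Set E}
    (t : Finset ι) {f : ι → E → ℝ} (hs : Convex ℝ s) (hf : ∀ i ∈ t, ConvexOn ℝ s (f i)) :
    ConvexOn ℝ s fun x => ∑ i ∈ t, f i x := by
  classical
  induction t using Finset.induction_on with
  | empty => simpa using convexOn_const 0 hs
  | insert i t hi ih =>
    simp only [sum_insert hi]
    exact (hf i (mem_insert_self i t)).add (ih fun j hj => hf j (mem_insert_of_mem hj))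

theorem concaveOn_neg_mul_norm_sq_sub_mul_sum {ι E : Type*} [Fintype ι]
    [SeminormedAddCommGroup E] [NormedSpace ℝ E] (A : (ι → ℝ) →ₗ[ℝ] E) {a b : ℝ}
    (ha : 0 ≤ a) (hb : 0 ≤ b) {ℓ : ι → ℝ → ℝ} (hℓ : ∀ i, ConvexOn ℝ univ (ℓ i)) :
    ConcaveOn ℝ univ fun α => -a * ‖A α‖ ^ 2 - b * ∑ i, ℓ i (-α i) := by
  have hquad : ConvexOn ℝ univ fun α => ‖A α‖ ^ 2 :=
    (convexOn_univ_norm.pow (fun _ _ => norm_nonneg _) 2).comp_linearMap A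
  have hloss : ConvexOn ℝ univ fun α : ι → ℝ => ∑ i, ℓ i (-α i) :=
    convexOn_finset_sum _ convex_univ fun i _ =>
      (hℓ i).comp_linearMap (-LinearMap.proj (R := ℝ) (φ := fun _ : ι => ℝ) i)
  refine ((hquad.smul ha).add (hloss.smul hb)).neg.congr fun α _ => ?_
  simp only [Pi.neg_apply, Pi.add_apply, smul_eq_mul]
  ring

theorem ConcaveOn.sum_mul_integral_le_integral_sum {Ω ι E : Type*} [MeasurableSpace Ω]
    {μ : Measure Ω} [AddCommGroup E] [Module ℝ E] {f : E → ℝ} (hf : ConcaveOn ℝ univ f)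
    {t : Finset ι} {w : ι → ℝ} (hw₀ : ∀ i ∈ t, 0 ≤ w i) (hw₁ : ∑ i ∈ t, w i = 1)
    {p : ι → Ω → E} (hp : ∀ i ∈ t, Integrable (fun ω => f (p i ω)) μ)
    (hsum : Integrable (fun ω => f (∑ i ∈ t, w i • p i ω)) μ) :
    ∑ i ∈ t, w i * ∫ ω, f (p i ω) ∂μ ≤ ∫ ω, f (∑ i ∈ t, w i • p i ω) ∂μ := by
  have hwp : ∀ i ∈ t, Integrable (fun ω => w i * f (p i ω)) μ := fun i hi =>
    (hp i hi).const_mul _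
  simp_rw [← integral_const_mul, ← integral_finsetSum t hwp]
  exact integral_mono (integrable_finsetSum t hwp) hsum fun ω =>
    by simpa using hf.le_map_sum hw₀ hw₁ fun i _ => mem_univ (p i ω)

section locGap

variable {m : ℕ} {D : (Fin m → ℝ) → ℝ} {S : Set (Fin m)} {α : Fin m → ℝ}

theorem locGap_nonneg (h : BddAbove (D '' {β | ∀ i ∉ S, β i = α i})) : 0 ≤ locGap D S α :=
  sub_nonneg.mpr (le_csSup h ⟨α, fun _ _ => rfl, rfl⟩)

theorem locGap_add {Δ : Fin m → ℝ} (hΔ : ∀ i ∉ S, Δ i = 0) :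
    locGap D S (α + Δ) = locGap D S α + (D α - D (α + Δ)) := by
  have hblock : {β : Fin m → ℝ | ∀ i ∉ S, β i = (α + Δ) i} = {β | ∀ i ∉ S, β i = α i} := by
    ext β
    simp +contextual [hΔ]
  rw [locGap, locGap, hblock]
  ring

variable {Ω : Type*} [MeasurableSpace Ω] {μ : Measure Ω} {Δ : Ω → Fin m → ℝ}

theorem integrable_comp_add_of_integrable_locGap [IsFiniteMeasure μ]
    (hΔ : ∀ ω, ∀ i ∉ S, Δ ω i = 0) (hint : Integrable (fun ω => locGap D S (α + Δ ω)) μ) :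
    Integrable (fun ω => D (α + Δ ω)) μ := by
  refine ((integrable_const (locGap D S α + D α)).sub hint).congr (.of_forall fun ω => ?_)
  simp only [Pi.sub_apply, locGap_add (hΔ ω)]
  ring

theorem one_sub_mul_locGap_le_integral_sub [IsProbabilityMeasure μ] {Θ : ℝ}
    (hΔ : ∀ ω, ∀ i ∉ S, Δ ω i = 0) (hint : Integrable (fun ω => locGap D S (α + Δ ω)) μ)
    (himp : ∫ ω, locGap D S (α + Δ ω) ∂μ ≤ Θ * locGap D S α) :
    (1 - Θ) * locGap D S α ≤ (∫ ω, D (α + Δ ω) ∂μ) - D α := by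
  have hD : ∫ ω, D (α + Δ ω) ∂μ = locGap D S α + D α - ∫ ω, locGap D S (α + Δ ω) ∂μ := by
    calc ∫ ω, D (α + Δ ω) ∂μ = ∫ ω, (locGap D S α + D α - locGap D S (α + Δ ω)) ∂μ :=
          integral_congr_ae (.of_forall fun ω => by simp only [locGap_add (hΔ ω)]; ring)
      _ = _ := by simp [integral_sub (integrable_const _) hint]
  linarith

end locGap

theorem gdca_per_step_expected_improvement_general
    (m d K : ℕ) (hK : 0 < K)
    (x : Fin m → EuclideanSpace ℝ (Fin d))
    (lam : ℝ) (hlam : 0 < lam)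
    (ℓs : Fin m → ℝ → ℝ) (hconv : ∀ i, ConvexOn ℝ Set.univ (ℓs i))
    (A : (Fin m → ℝ) → EuclideanSpace ℝ (Fin d))
    (hA : ∀ α, A α = (1 / (lam * m)) • ∑ i, α i • x i)
    (D : (Fin m → ℝ) → ℝ)
    (hD : ∀ α, D α = -(lam / 2) * ‖A α‖ ^ 2 - (1 / m) * ∑ i, ℓs i (-(α i)))
    (Ω : Type*) [MeasurableSpace Ω] (μ : Measure Ω) [IsProbabilityMeasure μ]
    (S : Fin K → Set (Fin m))
    (Δ : Fin K → Ω → Fin m → ℝ)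
    (hsupp : ∀ k ω, ∀ i ∉ S k, Δ k ω i = 0)
    (α : Fin m → ℝ)
    (hbdd : ∀ k, BddAbove (D '' {β | ∀ i ∉ S k, β i = α i}))
    (β : Fin K → ℝ) (hβ0 : ∀ k, 0 ≤ β k)
    (hβsum : ∑ k, β k = 1)
    (Θ : Fin K → ℝ)
    (hintD : Integrable (fun ω => D (α + ∑ k, β k • Δ k ω)) μ)
    (hintε : ∀ k, Integrable (fun ω => locGap D (S k) (α + Δ k ω)) μ)
    (himp : ∀ k, ∫ ω, locGap D (S k) (α + Δ k ω) ∂μ ≤ Θ k * locGap D (S k) α) :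
    (Finset.univ.inf' ⟨⟨0, hK⟩, Finset.mem_univ _⟩ fun k => (1 - Θ k) * β k) *
        ∑ k, locGap D (S k) α ≤
      (∫ ω, D (α + ∑ k, β k • Δ k ω) ∂μ) - D α := by
  have hconc : ConcaveOn ℝ univ D := by
    convert concaveOn_neg_mul_norm_sq_sub_mul_sum
      ((1 / (lam * m)) • Fintype.linearCombination ℝ x) (by positivity : 0 ≤ lam / 2)
      (by positivity : (0 : ℝ) ≤ 1 / m) hconv using 1
    ext α
    simp [hD, hA, Fintype.linearCombination_apply]
  have hcomb : ∀ ω, ∑ k, β k • (α + Δ k ω) = α + ∑ k, β k • Δ k ω := fun ω => by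
    simp only [smul_add, sum_add_distrib, ← sum_smul, hβsum, one_smul]
  have hjensen := hconc.sum_mul_integral_le_integral_sum (μ := μ) (fun k _ => hβ0 k) hβsum
    (fun k _ => integrable_comp_add_of_integrable_locGap (hsupp k) (hintε k))
    (by simpa only [hcomb] using hintD)
  simp only [hcomb] at hjensen
  calc (univ.inf' ⟨⟨0, hK⟩, mem_univ _⟩ fun k => (1 - Θ k) * β k) * ∑ k, locGap D (S k) α
      ≤ ∑ k, (1 - Θ k) * β k * locGap D (S k) α := by
        rw [mul_sum]
        exact sum_le_sum fun k _ =>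
          mul_le_mul_of_nonneg_right (inf'_le _ (mem_univ k)) (locGap_nonneg (hbdd k))
    _ ≤ ∑ k, β k * ((∫ ω, D (α + Δ k ω) ∂μ) - D α) := sum_le_sum fun k _ => by
        rw [mul_comm _ (β k), mul_assoc]
        exact mul_le_mul_of_nonneg_left
          (one_sub_mul_locGap_le_integral_sub (hsupp k) (hintε k) (himp k)) (hβ0 k)
    _ = (∑ k, β k * ∫ ω, D (α + Δ k ω) ∂μ) - D α := by
        simp only [mul_sub, sum_sub_distrib, ← sum_mul, hβsum, one_mul]
    _ ≤ (∫ ω, D (α + ∑ k, β k • Δ k ω) ∂μ) - D α := by linarith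

/-- Per-step expected improvement of GDCA-Tree: the expected dual increase of the
weighted block update is at least `(minₖ (1 − Θₖ) βₖ) · Σₖ ε_{Sₖ}(α)`. -/
theorem gdca_per_step_expected_improvement
    (m d K : ℕ) (hm : 0 < m) (hd : 0 < d) (hK : 0 < K)
    (x : Fin m → EuclideanSpace ℝ (Fin d)) (hx : ∀ i, ‖x i‖ ≤ 1)
    (lam : ℝ) (hlam : 0 < lam)
    (ℓs : Fin m → ℝ → ℝ) (hconv : ∀ i, ConvexOn ℝ Set.univ (ℓs i))
    (A : (Fin m → ℝ) → EuclideanSpace ℝ (Fin d))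
    (hA : ∀ α, A α = (1 / (lam * m)) • ∑ i, α i • x i)
    (D : (Fin m → ℝ) → ℝ)
    (hD : ∀ α, D α = -(lam / 2) * ‖A α‖ ^ 2 - (1 / m) * ∑ i, ℓs i (-(α i)))
    (Ω : Type*) [MeasurableSpace Ω] (μ : Measure Ω) [IsProbabilityMeasure μ]
    (S : Fin K → Set (Fin m))
    (hdisj : ∀ k k', k ≠ k' → Disjoint (S k) (S k'))
    (Δ : Fin K → Ω → Fin m → ℝ) (hmeas : ∀ k, Measurable (Δ k))
    (hsupp : ∀ k ω, ∀ i ∉ S k, Δ k ω i = 0)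
    (α : Fin m → ℝ)
    (hbdd : ∀ k, BddAbove (D '' {β | ∀ i ∉ S k, β i = α i}))
    (β : Fin K → ℝ) (hβ0 : ∀ k, 0 ≤ β k) (hβ1 : ∀ k, β k ≤ 1)
    (hβsum : ∑ k, β k = 1)
    (Θ : Fin K → ℝ) (hΘ0 : ∀ k, 0 ≤ Θ k) (hΘ1 : ∀ k, Θ k < 1)
    (hintD : Integrable (fun ω => D (α + ∑ k, β k • Δ k ω)) μ)
    (hintε : ∀ k, Integrable (fun ω => locGap D (S k) (α + Δ k ω)) μ)
    (himp : ∀ k, ∫ ω, locGap D (S k) (α + Δ k ω) ∂μ ≤ Θ k * locGap D (S k) α) :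
    (Finset.univ.inf' ⟨⟨0, hK⟩, Finset.mem_univ _⟩ fun k => (1 - Θ k) * β k) *
        ∑ k, locGap D (S k) α ≤
      (∫ ω, D (α + ∑ k, β k • Δ k ω) ∂μ) - D α :=
  gdca_per_step_expected_improvement_general m d K hK x lam hlam ℓs hconv A hA D hD Ω μ S Δ hsupp α
    hbdd β hβ0 hβsum Θ hintD hintε himp
end

section
/- (One-step local SDCA improvement underlying Proposition 1.) Suppose λ > 0, γ > 0, ‖x_i‖₂ ≤ 1 for all i, and each ℓ*_i is γ-strongly convex, i.e., b ↦ ℓ*_i(b) − (γ/2)b² is convex on ℝ. Let B ⊆ {1, …, m} be nonempty with |B| = m_B, let α ∈ ℝ^m, and assume the set {D(β) : β_i = α_i for all i ∉ B} is bounded above, so ε_B(α) is defined. For each i ∈ B let α^{⟨i⟩} = α + Δ_i e_i, where Δ_i ∈ ℝ maximizes c ↦ D(α + c e_i) (such a maximizer exists, since this function is strongly concave). Then (1/m_B) Σ_{i ∈ B} ( D(α^{⟨i⟩}) − D(α) ) ≥ ( λmγ/(1 + λmγ) ) · (1/m_B) · ε_B(α); equivalently, (1/m_B) Σ_{i ∈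 B} ε_B(α^{⟨i⟩}) ≤ ( 1 − ( λmγ/(1 + λmγ) ) · (1/m_B) ) · ε_B(α). -/
/-!
Fix `β` agreeing with `α` outside `B` and put `s = λmγ/(1 + λmγ)`. Concavity of
`α ↦ -(λ/2)‖Aα‖²` bounds `D β - D α` by a sum of first-order terms, one per coordinate. Moving
coordinate `i ∈ B` alone a fraction `s` of the way to `βᵢ` gains at least `s` times its term:
strong convexity of `ℓ*ᵢ` absorbs the curvature `s²(βᵢ - αᵢ)²‖xᵢ‖²/(2λm²)` as soon as
`s‖xᵢ‖² ≤ λmγ(1 - s)`, which is an equality for this `s` and `‖xᵢ‖ = 1`. The exact coordinate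
maximizers do at least as well, so `s (D β - D α) ≤ ∑_{i ∈ B} (D α⟨i⟩ - D α)`, and taking the
supremum over `β` gives the first bound. The second follows from
`ε_B(α⟨i⟩) = ε_B(α) - (D α⟨i⟩ - D α)`.
-/

open scoped BigOperators

open scoped RealInnerProductSpace

section LocGap

variable {m : ℕ} {D : (Fin m → ℝ) → ℝ} {S : Set (Fin m)} {α : Fin m → ℝ}

theorem locGap_eq_of_eqOn_compl {α' : Fin m → ℝ} (h : ∀ i ∉ S, α' i = α i) :
    locGap D S α' = locGap D S α + (D α - D α') := by
  have hset : {β : Fin m → ℝ | ∀ i ∉ S, β i = α' i} = {β | ∀ i ∉ S, β i = α i} := by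
    ext β
    exact forall₂_congr fun i hi ↦ by rw [h i hi]
  rw [locGap, locGap, hset]
  ring

theorem mul_locGap_le {s T : ℝ} (hs : 0 < s)
    (h : ∀ β : Fin m → ℝ, (∀ i ∉ S, β i = α i) → s * (D β - D α) ≤ T) :
    s * locGap D S α ≤ T := by
  have hsup : sSup (D '' {β | ∀ i ∉ S, β i = α i}) ≤ D α + T / s := by
    refine csSup_le ⟨D α, α, fun _ _ ↦ rfl, rfl⟩ ?_
    rintro _ ⟨β, hβ, rfl⟩
    linarith [(le_div_iff₀' hs).2 (h β hβ)]
  rw [locGap, ← le_div_iff₀' hs]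
  linarith

end LocGap

section SDCA

variable {ι E : Type*} [Fintype ι] [NormedAddCommGroup E] [InnerProductSpace ℝ E]

noncomputable def sdcaPrimal (x : ι → E) (lam m : ℝ) (α : ι → ℝ) : E :=
  (1 / (lam * m)) • ∑ i, α i • x i

noncomputable def sdcaDual (x : ι → E) (lam m : ℝ) (ℓs : ι → ℝ → ℝ) (α : ι → ℝ) : ℝ :=
  -(lam / 2) * ‖sdcaPrimal x lam m α‖ ^ 2 - (1 / m) * ∑ i, ℓs i (-(α i))

variable {x : ι → E} {lam m : ℝ} {ℓs : ι → ℝ → ℝ}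

theorem sdcaPrimal_sub (α β : ι → ℝ) :
    sdcaPrimal x lam m β - sdcaPrimal x lam m α =
      (1 / (lam * m)) • ∑ i, (β i - α i) • x i := by
  simp only [sdcaPrimal, ← smul_sub, ← Finset.sum_sub_distrib, sub_smul]

theorem sdcaPrimal_add_smul_single [DecidableEq ι] (α : ι → ℝ) (i : ι) (c : ℝ) :
    sdcaPrimal x lam m (α + c • Pi.single i 1) =
      sdcaPrimal x lam m α + (c / (lam * m)) • x i := by
  rw [← sub_eq_iff_eq_add', sdcaPrimal_sub]
  simp [Pi.single_apply, smul_smul, div_eq_inv_mul]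

theorem sdcaDual_le (hlam : 0 < lam) (α β : ι → ℝ) :
    sdcaDual x lam m ℓs β ≤ sdcaDual x lam m ℓs α - (1 / m) *
      ∑ i, ((β i - α i) * ⟪sdcaPrimal x lam m α, x i⟫ + ℓs i (-(β i)) - ℓs i (-(α i))) := by
  rw [sdcaDual, sdcaDual]
  set w := sdcaPrimal x lam m α
  set w' := sdcaPrimal x lam m β
  have hlin : (1 / m) * ∑ i, (β i - α i) * ⟪w, x i⟫ = lam * ⟪w, w' - w⟫ := by
    rw [sdcaPrimal_sub, inner_smul_right, inner_sum]
    simp only [real_inner_smul_right]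
    field_simp
  have hquad : ‖w'‖ ^ 2 = ‖w‖ ^ 2 + 2 * ⟪w, w' - w⟫ + ‖w' - w‖ ^ 2 := by
    rw [← norm_add_sq_real, add_sub_cancel]
  rw [Finset.sum_sub_distrib, Finset.sum_add_distrib, mul_sub, mul_add, hlin, hquad]
  linarith [mul_nonneg hlam.le (sq_nonneg ‖w' - w‖)]

theorem sdcaDual_add_smul_single [DecidableEq ι] (hlam : lam ≠ 0) (α : ι → ℝ) (i : ι) (c : ℝ) :
    sdcaDual x lam m ℓs (α + c • Pi.single i 1) = sdcaDual x lam m ℓs α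
      - c / m * ⟪sdcaPrimal x lam m α, x i⟫ - c ^ 2 / (2 * lam * m ^ 2) * ‖x i‖ ^ 2
      - 1 / m * (ℓs i (-(α i + c)) - ℓs i (-(α i))) := by
  have hsum : ∑ j, ℓs j (-((α + c • Pi.single i 1 : ι → ℝ) j)) - ∑ j, ℓs j (-(α j)) =
      ℓs i (-(α i + c)) - ℓs i (-(α i)) := by
    rw [← Finset.sum_sub_distrib, Finset.sum_eq_single i (fun j _ hj ↦ by simp [hj]) (by simp)]
    simp
  rw [sdcaDual, sdcaDual, sdcaPrimal_add_smul_single, eq_add_of_sub_eq' hsum, norm_add_sq_real,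
    real_inner_smul_right, norm_smul, Real.norm_eq_abs, mul_pow, sq_abs]
  field_simp
  ring

theorem mul_sub_le_sdcaDual_add_smul_single [DecidableEq ι] {γ s : ℝ} {i : ι}
    (hlam : 0 < lam) (hm : 0 < m) (hs₀ : 0 ≤ s) (hs₁ : s ≤ 1)
    (hsx : s * ‖x i‖ ^ 2 ≤ lam * m * γ * (1 - s)) (hℓ : StrongConvexOn Set.univ γ (ℓs i))
    (α : ι → ℝ) (b : ℝ) :
    -(s / m) * ((b - α i) * ⟪sdcaPrimal x lam m α, x i⟫ + ℓs i (-b) - ℓs i (-(α i))) ≤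
      sdcaDual x lam m ℓs (α + (s * (b - α i)) • Pi.single i 1) - sdcaDual x lam m ℓs α := by
  have hconv : ℓs i (-(α i + s * (b - α i))) ≤
      (1 - s) * ℓs i (-(α i)) + s * ℓs i (-b) - (1 - s) * s * (γ / 2 * (b - α i) ^ 2) := by
    have := hℓ.2 (Set.mem_univ (-(α i))) (Set.mem_univ (-b)) (sub_nonneg.2 hs₁) hs₀ (by ring)
    simp only [smul_eq_mul, Real.norm_eq_abs, sq_abs] at this
    convert this using 2 <;> ring
  have hcurv : (s * (b - α i)) ^ 2 / (2 * lam * m ^ 2) * ‖x i‖ ^ 2 ≤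
      1 / m * ((1 - s) * s * (γ / 2 * (b - α i) ^ 2)) :=
    calc (s * (b - α i)) ^ 2 / (2 * lam * m ^ 2) * ‖x i‖ ^ 2
        = s * (b - α i) ^ 2 / (2 * lam * m ^ 2) * (s * ‖x i‖ ^ 2) := by ring
      _ ≤ s * (b - α i) ^ 2 / (2 * lam * m ^ 2) * (lam * m * γ * (1 - s)) := by gcongr
      _ = 1 / m * ((1 - s) * s * (γ / 2 * (b - α i) ^ 2)) := by field_simp
  rw [sdcaDual_add_smul_single hlam.ne']
  linear_combination mul_le_mul_of_nonneg_left hconv (one_div_nonneg.2 hm.le) + hcurv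

theorem mul_sdcaDual_sub_le_sum [DecidableEq ι] {γ s : ℝ} {B : Finset ι}
    (hlam : 0 < lam) (hm : 0 < m) (hs₀ : 0 ≤ s) (hs₁ : s ≤ 1)
    (hsx : ∀ i ∈ B, s * ‖x i‖ ^ 2 ≤ lam * m * γ * (1 - s))
    (hℓ : ∀ i ∈ B, StrongConvexOn Set.univ γ (ℓs i)) {α β : ι → ℝ} (hβ : ∀ i ∉ B, β i = α i) :
    s * (sdcaDual x lam m ℓs β - sdcaDual x lam m ℓs α) ≤
      ∑ i ∈ B, (sdcaDual x lam m ℓs (α + (s * (β i - α i)) • Pi.single i 1) -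
        sdcaDual x lam m ℓs α) := by
  set g : ι → ℝ := fun i ↦
    (β i - α i) * ⟪sdcaPrimal x lam m α, x i⟫ + ℓs i (-(β i)) - ℓs i (-(α i))
  have hg : ∑ i ∈ B, g i = ∑ i, g i :=
    Finset.sum_subset (Finset.subset_univ B) fun i _ hi ↦ by simp [g, hβ i hi]
  calc s * (sdcaDual x lam m ℓs β - sdcaDual x lam m ℓs α)
      ≤ s * (-(1 / m) * ∑ i, g i) := by
        gcongr
        linarith [sdcaDual_le (x := x) (m := m) (ℓs := ℓs) hlam α β]
    _ = ∑ i ∈ B, -(s / m) * g i := by rw [← Finset.mul_sum, hg]; ring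
    _ ≤ _ := Finset.sum_le_sum fun i hi ↦
        mul_sub_le_sdcaDual_add_smul_single hlam hm hs₀ hs₁ (hsx i hi) (hℓ i hi) α (β i)

end SDCA

theorem local_sdca_one_step_improvement_general
    (m d : ℕ) (hm : 0 < m)
    (x : Fin m → EuclideanSpace ℝ (Fin d)) (hx : ∀ i, ‖x i‖ ≤ 1)
    (lam γ : ℝ) (hlam : 0 < lam) (hγ : 0 < γ)
    (ℓs : Fin m → ℝ → ℝ)
    (hsc : ∀ i, ConvexOn ℝ Set.univ fun b => ℓs i b - γ / 2 * b ^ 2)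
    (A : (Fin m → ℝ) → EuclideanSpace ℝ (Fin d))
    (hA : ∀ α, A α = (1 / (lam * m)) • ∑ i, α i • x i)
    (D : (Fin m → ℝ) → ℝ)
    (hD : ∀ α, D α = -(lam / 2) * ‖A α‖ ^ 2 - (1 / m) * ∑ i, ℓs i (-(α i)))
    (B : Finset (Fin m)) (hB : B.Nonempty)
    (α : Fin m → ℝ)
    (Δ : Fin m → ℝ)
    (hmax : ∀ i ∈ B, ∀ c : ℝ,
      D (α + c • (Pi.single i 1 : Fin m → ℝ)) ≤ D (α + Δ i • (Pi.single i 1 : Fin m → ℝ))) :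
    lam * m * γ / (1 + lam * m * γ) * (1 / (B.card : ℝ)) * locGap D ↑B α ≤
      (1 / (B.card : ℝ)) * ∑ i ∈ B, (D (α + Δ i • (Pi.single i 1 : Fin m → ℝ)) - D α) ∧
    (1 / (B.card : ℝ)) * ∑ i ∈ B, locGap D ↑B (α + Δ i • (Pi.single i 1 : Fin m → ℝ)) ≤
      (1 - lam * m * γ / (1 + lam * m * γ) * (1 / (B.card : ℝ))) * locGap D ↑B α := by
  obtain rfl : A = sdcaPrimal x lam m := funext hA
  obtain rfl : D = sdcaDual x lam m ℓs := funext hD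
  set D := sdcaDual x lam m ℓs
  set s := lam * m * γ / (1 + lam * m * γ)
  set T := ∑ i ∈ B, (D (α + Δ i • Pi.single i 1) - D α)
  have hmpos : (0 : ℝ) < m := Nat.cast_pos.2 hm
  have hs₀ : 0 < s := by positivity
  have hs₁ : s ≤ 1 := (div_le_one (by positivity)).2 (by linarith)
  have hsx : ∀ i ∈ B, s * ‖x i‖ ^ 2 ≤ lam * m * γ * (1 - s) := fun i _ ↦ by
    have hxi : ‖x i‖ ^ 2 ≤ 1 := pow_le_one₀ (norm_nonneg _) (hx i)
    have hs : s = lam * m * γ * (1 - s) := by simp only [s]; field_simp; ring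
    exact (mul_le_of_le_one_right hs₀.le hxi).trans_eq hs
  have hℓ : ∀ i ∈ B, StrongConvexOn Set.univ γ (ℓs i) := fun i _ ↦
    strongConvexOn_iff_convex.2 (by simpa only [Real.norm_eq_abs, sq_abs] using hsc i)
  have hgap : s * locGap D ↑B α ≤ T :=
    mul_locGap_le hs₀ fun β hβ ↦ (mul_sdcaDual_sub_le_sum hlam hmpos hs₀.le hs₁ hsx hℓ hβ).trans
      (Finset.sum_le_sum fun i hi ↦ by linarith [hmax i hi (s * (β i - α i))])
  have hshift : ∀ i ∈ B, locGap D ↑B (α + Δ i • Pi.single i 1) =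
      locGap D ↑B α + (D α - D (α + Δ i • Pi.single i 1)) := fun i hi ↦
    locGap_eq_of_eqOn_compl fun j hj ↦ by
      simp [show j ≠ i from fun h ↦ hj (h ▸ hi)]
  have hsum : ∑ i ∈ B, locGap D ↑B (α + Δ i • Pi.single i 1) = B.card * locGap D ↑B α - T := by
    simp only [Finset.sum_congr rfl hshift, Finset.sum_add_distrib, Finset.sum_const, nsmul_eq_mul,
      T, Finset.sum_sub_distrib]
    ring
  have hcard : (0 : ℝ) < B.card := Nat.cast_pos.2 hB.card_pos
  constructor
  · rw [mul_comm s, mul_assoc]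
    gcongr
  · rw [hsum]
    field_simp
    linarith

/-- One-step local SDCA improvement underlying Proposition 1: averaging the best
single-coordinate updates over `i ∈ B` gives an expected dual improvement of at
least `(λmγ/(1 + λmγ))·(1/m_B)·ε_B(α)`; equivalently, the expected local
sub-optimality gap contracts by the factor `1 − (λmγ/(1 + λmγ))·(1/m_B)`. -/
theorem local_sdca_one_step_improvement
    (m d : ℕ) (hm : 0 < m) (hd : 0 < d)
    (x : Fin m → EuclideanSpace ℝ (Fin d)) (hx : ∀ i, ‖x i‖ ≤ 1)
    (lam γ : ℝ) (hlam : 0 < lam) (hγ : 0 < γ)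
    (ℓs : Fin m → ℝ → ℝ)
    (hsc : ∀ i, ConvexOn ℝ Set.univ fun b => ℓs i b - γ / 2 * b ^ 2)
    (A : (Fin m → ℝ) → EuclideanSpace ℝ (Fin d))
    (hA : ∀ α, A α = (1 / (lam * m)) • ∑ i, α i • x i)
    (D : (Fin m → ℝ) → ℝ)
    (hD : ∀ α, D α = -(lam / 2) * ‖A α‖ ^ 2 - (1 / m) * ∑ i, ℓs i (-(α i)))
    (B : Finset (Fin m)) (hB : B.Nonempty)
    (α : Fin m → ℝ)
    (hbdd : BddAbove (D '' {β | ∀ i ∉ (B : Set (Fin m)), β i = α i}))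
    (Δ : Fin m → ℝ)
    (hmax : ∀ i ∈ B, ∀ c : ℝ,
      D (α + c • (Pi.single i 1 : Fin m → ℝ)) ≤ D (α + Δ i • (Pi.single i 1 : Fin m → ℝ))) :
    lam * m * γ / (1 + lam * m * γ) * (1 / (B.card : ℝ)) * locGap D ↑B α ≤
      (1 / (B.card : ℝ)) * ∑ i ∈ B, (D (α + Δ i • (Pi.single i 1 : Fin m → ℝ)) - D α) ∧
    (1 / (B.card : ℝ)) * ∑ i ∈ B, locGap D ↑B (α + Δ i • (Pi.single i 1 : Fin m → ℝ)) ≤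
      (1 - lam * m * γ / (1 + lam * m * γ) * (1 / (B.card : ℝ))) * locGap D ↑B α :=
  local_sdca_one_step_improvement_general m d hm x hx lam γ hlam hγ ℓs hsc A hA D hD B hB α Δ hmax
end
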